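/- Suppose signals are bounded and g₀(α⁻) > 0 and g₁(α⁻) > 0. Then for every δ ∈ (0,1) and every constant C > 0 there exists μ' ∈ (0,1) such that for all μ ∈ [μ', 1) and all τ ∈ [0,1]: (1−δ)·[ (2α⁻_μ − 1) − (1 − G_μ(v_μ(τ,0)))·τ ] ≥ δ·C·μ(1−μ)·[ G₁(v_μ(τ,0)) − G₀(v_μ(τ,0)) ], where G_μ = μG₀ + (1−μ)G₁, α⁻_μ = μα⁻/(μα⁻+(1−μ)(1−α⁻)), and v_μ(τ,0) = max{ α⁻, (1−μ)(1+τ)/(2μ − (2μ−1)(1+τ)) } is the consumer's private-belief threshold for buying from Firm 0 when Firm 1 prices at 0 (so the market is full). -/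

import Mathlib

/-
Write `ε = 1 - μ`, `α = α⁻` and `v = v_μ(τ,0)`. Multiplied by `(μα + ε(1-α))((2μ-1)v + ε) ∈ (0,1]`,
which clears the denominators of the posterior and of the threshold, the bracket on the right is
at least `G_μ(v)(v - ε)(μα + ε(1-α)) - 2εμ(v - α)`. Both the left-hand side and `2εμ(v - α)` are
`O(ε G₀(v))`: the private belief is at least `α` almost surely, so the likelihood ratio gives
`α G₁ ≤ (1-α) G₀`, and `g₀(α) > 0` makes `G₀` grow at least linearly above `α`. The remaining
term is at least `α² G₀(v) / 6`, so the inequality holds once `ε` is small.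
-/

open MeasureTheory Set Filter Topology
open scoped ENNReal NNReal

noncomputable section

/-- The consumer's possible actions: buy product 0, buy product 1, or exit. -/
inductive CAction : Type
  | buy0 : CAction
  | buy1 : CAction
  | exit : CAction

instance : MeasurableSpace CAction := ⊤

/-- A signal structure `(F₀, F₁, S)`: two mutually absolutely continuous
probability measures on a measurable space `S`. -/
structure SignalStructure (S : Type) [MeasurableSpace S] : Type where
  F0 : Measure S
  F1 : Measure S
  prob0 : IsProbabilityMeasure F0
  prob1 : IsProbabilityMeasure F1
  ac01 : F0 ≪ F1
  ac10 : F1 ≪ F0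

namespace SignalStructure

variable {S : Type} [MeasurableSpace S]

/-- The reference measure `(F₀ + F₁)/2`. -/
def ref (𝒮 : SignalStructure S) : Measure S := (2 : ℝ≥0∞)⁻¹ • (𝒮.F0 + 𝒮.F1)

/-- Radon–Nikodym density of `F₀` with respect to `(F₀+F₁)/2`. -/
def f0 (𝒮 : SignalStructure S) : S → ℝ≥0∞ := 𝒮.F0.rnDeriv 𝒮.ref

/-- Radon–Nikodym density of `F₁` with respect to `(F₀+F₁)/2`. -/
def f1 (𝒮 : SignalStructure S) : S → ℝ≥0∞ := 𝒮.F1.rnDeriv 𝒮.ref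

/-- The private belief `p(s) = f₀(s)/(f₀(s)+f₁(s))`. -/
def p (𝒮 : SignalStructure S) (s : S) : ℝ :=
  (𝒮.f0 s).toReal / ((𝒮.f0 s).toReal + (𝒮.f1 s).toReal)

/-- `G₀(x) = F₀ {s | p(s) < x}`, the CDF of the private belief in state 0. -/
def G0 (𝒮 : SignalStructure S) (x : ℝ) : ℝ := (𝒮.F0 {s | 𝒮.p s < x}).toReal

/-- `G₁(x) = F₁ {s | p(s) < x}`, the CDF of the private belief in state 1. -/
def G1 (𝒮 : SignalStructure S) (x : ℝ) : ℝ := (𝒮.F1 {s | 𝒮.p s < x}).toReal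

/-- `α⁻ = inf {x | G(x) > 0}`. -/
def alphaLo (𝒮 : SignalStructure S) : ℝ := sInf {x | 0 < 𝒮.G0 x}

/-- `α⁺ = sup {x | G(x) < 1}`. -/
def alphaHi (𝒮 : SignalStructure S) : ℝ := sSup {x | 𝒮.G0 x < 1}

/-- Signals are bounded if `α⁻ > 0` and `α⁺ < 1`. -/
def Bounded (𝒮 : SignalStructure S) : Prop := 0 < 𝒮.alphaLo ∧ 𝒮.alphaHi < 1

/-- Signals are unbounded if `α⁻ = 0` and `α⁺ = 1`. -/
def Unbounded (𝒮 : SignalStructure S) : Prop := 𝒮.alphaLo = 0 ∧ 𝒮.alphaHi = 1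

/-- Assumption 1: `G₀, G₁` are differentiable on `(α⁻, α⁺)` with continuous
nonnegative derivatives `g₀, g₁ : [α⁻, α⁺] → ℝ₊`. -/
structure Assumption1 (𝒮 : SignalStructure S) (g0 g1 : ℝ → ℝ) : Prop where
  cont0 : ContinuousOn g0 (Icc 𝒮.alphaLo 𝒮.alphaHi)
  cont1 : ContinuousOn g1 (Icc 𝒮.alphaLo 𝒮.alphaHi)
  nonneg0 : ∀ x ∈ Icc 𝒮.alphaLo 𝒮.alphaHi, 0 ≤ g0 x
  nonneg1 : ∀ x ∈ Icc 𝒮.alphaLo 𝒮.alphaHi, 0 ≤ g1 x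
  hasDeriv0 : ∀ x ∈ Ioo 𝒮.alphaLo 𝒮.alphaHi, HasDerivAt 𝒮.G0 (g0 x) x
  hasDeriv1 : ∀ x ∈ Ioo 𝒮.alphaLo 𝒮.alphaHi, HasDerivAt 𝒮.G1 (g1 x) x

/-- The signal structure exhibits vanishing likelihood: `g₁(α⁻) = g₀(α⁺) = 0`. -/
def VanishingLikelihood (𝒮 : SignalStructure S) (g0 g1 : ℝ → ℝ) : Prop :=
  g1 𝒮.alphaLo = 0 ∧ g0 𝒮.alphaHi = 0

end SignalStructure

/-- Bayesian posterior on state 0 from a prior `μ` and a private belief `q`: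
`p_μ = μ q / (μ q + (1-μ)(1-q))`. -/
def posterior (μ q : ℝ) : ℝ := μ * q / (μ * q + (1 - μ) * (1 - q))

/-- The consumer's expected utility, given posterior `q` on state 0 and prices
`τ₀, τ₁`, from each action. -/
def cUtil (q τ0 τ1 : ℝ) : CAction → ℝ
  | CAction.buy0 => q - τ0
  | CAction.buy1 => (1 - q) - τ1
  | CAction.exit => 0

/-- A consumer pure strategy: maps the posted price pair and the signal to an action. -/
abbrev CStrategy (S : Type) : Type := ℝ → ℝ → S → CAction

/-- A mixed price strategy of a firm: a Borel probability measure on `[0,1]`. -/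
def IsPriceStrategy (φ : Measure ℝ) : Prop :=
  IsProbabilityMeasure φ ∧ φ (Icc (0:ℝ) 1) = 1

namespace SignalStructure

variable {S : Type} [MeasurableSpace S]

/-- The signal distribution under prior `μ`: the mixture `μ F₀ + (1-μ) F₁`. -/
def Fmix (𝒮 : SignalStructure S) (μ : ℝ) : Measure S :=
  ENNReal.ofReal μ • 𝒮.F0 + ENNReal.ofReal (1 - μ) • 𝒮.F1

/-- The probability (under prior `μ`) that the consumer takes action `a` when the
pure prices `τ₀, τ₁` are posted. -/
def actProb (𝒮 : SignalStructure S) (μ : ℝ) (σ : CStrategy S) (τ0 τ1 : ℝ) (a : CAction) : ℝ :=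
  (𝒮.Fmix μ {s | σ τ0 τ1 s = a}).toReal

/-- Firm 0's expected payoff in `Γ(μ)` under mixed strategies `φ₀, φ₁` and consumer
strategy `σ`. -/
def Pi0 (𝒮 : SignalStructure S) (μ : ℝ) (φ0 φ1 : Measure ℝ) (σ : CStrategy S) : ℝ :=
  ∫ τ, 𝒮.actProb μ σ τ.1 τ.2 CAction.buy0 * τ.1 ∂(φ0.prod φ1)

/-- Firm 1's expected payoff in `Γ(μ)`. -/
def Pi1 (𝒮 : SignalStructure S) (μ : ℝ) (φ0 φ1 : Measure ℝ) (σ : CStrategy S) : ℝ :=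
  ∫ τ, 𝒮.actProb μ σ τ.1 τ.2 CAction.buy1 * τ.2 ∂(φ0.prod φ1)

/-- The probability that the consumer takes action `a` under mixed price strategies. -/
def actProbMix (𝒮 : SignalStructure S) (μ : ℝ) (φ0 φ1 : Measure ℝ) (σ : CStrategy S)
    (a : CAction) : ℝ :=
  ∫ τ, 𝒮.actProb μ σ τ.1 τ.2 a ∂(φ0.prod φ1)

/-- A subgame perfect equilibrium of the stage game `Γ(μ)`: the consumer strategy is a
best reply to every price pair, and each firm's mixed price strategy maximizes its
expected payoff given the opponent's strategy and the consumer's strategy. -/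
structure IsSPE (𝒮 : SignalStructure S) (μ : ℝ) (φ0 φ1 : Measure ℝ) (σ : CStrategy S) :
    Prop where
  strat0 : IsPriceStrategy φ0
  strat1 : IsPriceStrategy φ1
  meas : ∀ τ0 τ1, Measurable (σ τ0 τ1)
  consumerBR : ∀ τ0 ∈ Icc (0:ℝ) 1, ∀ τ1 ∈ Icc (0:ℝ) 1,
    ∀ᵐ s ∂(𝒮.Fmix μ), ∀ a : CAction,
      cUtil (posterior μ (𝒮.p s)) τ0 τ1 a ≤ cUtil (posterior μ (𝒮.p s)) τ0 τ1 (σ τ0 τ1 s)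
  firm0opt : ∀ ψ : Measure ℝ, IsPriceStrategy ψ → 𝒮.Pi0 μ ψ φ1 σ ≤ 𝒮.Pi0 μ φ0 φ1 σ
  firm1opt : ∀ ψ : Measure ℝ, IsPriceStrategy ψ → 𝒮.Pi1 μ φ0 ψ σ ≤ 𝒮.Pi1 μ φ0 φ1 σ

/-- A deterrence equilibrium: an SPE in which some firm sells with probability zero. -/
def IsDeterrence (𝒮 : SignalStructure S) (μ : ℝ) (φ0 φ1 : Measure ℝ) (σ : CStrategy S) :
    Prop :=
  𝒮.IsSPE μ φ0 φ1 σ ∧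
    (𝒮.actProbMix μ φ0 φ1 σ CAction.buy0 = 0 ∨ 𝒮.actProbMix μ φ0 φ1 σ CAction.buy1 = 0)

/-- The market is full at `(μ, σ, τ₀, τ₁)` if the consumer exits with probability zero. -/
def MarketFull (𝒮 : SignalStructure S) (μ : ℝ) (σ : CStrategy S) (τ0 τ1 : ℝ) : Prop :=
  𝒮.Fmix μ {s | σ τ0 τ1 s = CAction.exit} = 0

open scoped Classical in
/-- The consumer's best-reply threshold `v_μ(τ₀,τ₁)` on the private belief. -/
def v (𝒮 : SignalStructure S) (μ : ℝ) (σ : CStrategy S) (τ0 τ1 : ℝ) : ℝ :=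
  if 𝒮.MarketFull μ σ τ0 τ1 then
    (1 - μ) * (1 + τ0 - τ1) / (2 * μ - (2 * μ - 1) * (1 + τ0 - τ1))
  else (1 - μ) * τ0 / (μ - (2 * μ - 1) * τ0)

end SignalStructure


theorem exists_Icc_half_lt_of_continuousWithinAt {g : ℝ → ℝ} {a b : ℝ} (hab : a < b)
    (hg : ContinuousWithinAt g (Icc a b) a) (hga : 0 < g a) :
    ∃ e ∈ Ioo a b, ∀ x ∈ Icc a e, g a / 2 < g x := by
  rw [ContinuousWithinAt, nhdsWithin_Icc_eq_nhdsGE hab] at hg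
  obtain ⟨e, hae, he⟩ := nhdsGE_basis_Icc.mem_iff.1
    ((hg.eventually (lt_mem_nhds (half_lt_self hga))).and (Ico_mem_nhdsGE hab))
  exact ⟨e, ⟨hae, (he ⟨hae.le, le_rfl⟩).2.2⟩, fun x hx => (he hx).1⟩

theorem exists_pos_mul_sub_le_of_hasDerivAt {f g : ℝ → ℝ} {a b : ℝ} (hab : a < b)
    (hf : Monotone f) (hf0 : ∀ x, 0 ≤ f x) (hderiv : ∀ x ∈ Ioo a b, HasDerivAt f (g x) x)
    (hg : ContinuousWithinAt g (Icc a b) a) (hga : 0 < g a) (M : ℝ) :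
    ∃ k > 0, ∀ w ≤ M, k * (w - a) ≤ f w := by
  obtain ⟨e, ⟨hae, heb⟩, hge⟩ := exists_Icc_half_lt_of_continuousWithinAt hab hg hga
  set k := g a / 2
  have hderiv' : ∀ x ∈ Ioc a e, HasDerivAt f (g x) x := fun x hx =>
    hderiv x ⟨hx.1, hx.2.trans_lt heb⟩
  have hslope : ∀ x ∈ Ioc a e, ∀ w ∈ Ioc a e, x ≤ w → k * (w - x) ≤ f w - f x := by
    refine (convex_Ioc a e).mul_sub_le_image_sub_of_le_deriv
      (fun x hx => (hderiv' x hx).continuousAt.continuousWithinAt) ?_ ?_ <;> rw [interior_Ioc]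
    · exact fun x hx => (hderiv' x (Ioo_subset_Ioc_self hx)).differentiableAt.differentiableWithinAt
    · intro x hx
      rw [(hderiv' x (Ioo_subset_Ioc_self hx)).deriv]
      exact (hge x (Ioo_subset_Icc_self hx)).le
  -- `f` need not be right-continuous at `a`, so let `x ↓ a` in the slope bound on `[x, w]`.
  have hlocal : ∀ w ∈ Ioc a e, k * (w - a) ≤ f w := by
    intro w hw
    have hlim : Tendsto (fun x => k * (w - x)) (𝓝[>] a) (𝓝 (k * (w - a))) :=
      ((continuous_const.mul (continuous_const.sub continuous_id)).tendsto a).mono_left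
        nhdsWithin_le_nhds
    refine le_of_tendsto hlim ?_
    filter_upwards [Ioc_mem_nhdsGT hw.1] with x hx
    linarith [hslope x ⟨hx.1, hx.2.trans hw.2⟩ w hw hx.2, hf0 x]
  set m := max (M - a) (e - a)
  have hm : 0 < m := lt_max_of_lt_right (sub_pos.2 hae)
  refine ⟨k * (e - a) / m, by positivity, fun w hwM => ?_⟩
  rcases le_or_gt w a with hwa | haw
  · exact (mul_nonpos_of_nonneg_of_nonpos (by positivity) (by linarith)).trans (hf0 w)
  have hcmp : (e - a) * (w - a) ≤ (min w e - a) * m := by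
    rcases le_total w e with hwe | hew
    · rw [min_eq_left hwe]; nlinarith [le_max_right (M - a) (e - a)]
    · rw [min_eq_right hew]; nlinarith [le_max_left (M - a) (e - a)]
  calc k * (e - a) / m * (w - a) ≤ k * (min w e - a) := by
        rw [div_mul_eq_mul_div, div_le_iff₀ hm, mul_assoc, mul_assoc]
        exact mul_le_mul_of_nonneg_left hcmp (by positivity)
    _ ≤ f (min w e) := hlocal (min w e) ⟨lt_min haw hae, min_le_right _ _⟩
    _ ≤ f w := hf (min_le_left _ _)

namespace SignalStructure

attribute [instance] SignalStructure.prob0 SignalStructure.prob1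

variable {S : Type} [MeasurableSpace S] (𝒮 : SignalStructure S)

theorem p_nonneg (s : S) : 0 ≤ 𝒮.p s :=
  div_nonneg ENNReal.toReal_nonneg (by positivity)

theorem p_le_one (s : S) : 𝒮.p s ≤ 1 :=
  div_le_one_of_le₀ (le_add_of_nonneg_right ENNReal.toReal_nonneg) (by positivity)

theorem measurable_p : Measurable 𝒮.p :=
  have h0 := (Measure.measurable_rnDeriv 𝒮.F0 𝒮.ref).ennreal_toReal
  have h1 := (Measure.measurable_rnDeriv 𝒮.F1 𝒮.ref).ennreal_toReal
  h0.div (h0.add h1)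

theorem G0_nonneg (x : ℝ) : 0 ≤ 𝒮.G0 x := ENNReal.toReal_nonneg

theorem G1_nonneg (x : ℝ) : 0 ≤ 𝒮.G1 x := ENNReal.toReal_nonneg

theorem G0_le_one (x : ℝ) : 𝒮.G0 x ≤ 1 :=
  ENNReal.toReal_le_of_le_ofReal zero_le_one (by simpa using prob_le_one)

theorem G1_le_one (x : ℝ) : 𝒮.G1 x ≤ 1 :=
  ENNReal.toReal_le_of_le_ofReal zero_le_one (by simpa using prob_le_one)

theorem G0_mono : Monotone 𝒮.G0 := fun _ _ hxy =>
  ENNReal.toReal_mono (measure_ne_top _ _) (measure_mono fun _ hs => lt_of_lt_of_le hs hxy)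

theorem G0_eq_one_of_one_lt {x : ℝ} (hx : 1 < x) : 𝒮.G0 x = 1 := by
  have : {s | 𝒮.p s < x} = univ := eq_univ_of_forall fun s => (𝒮.p_le_one s).trans_lt hx
  rw [G0, this, measure_univ, ENNReal.toReal_one]

theorem pos_of_G0_pos {x : ℝ} (hx : 0 < 𝒮.G0 x) : 0 < x := by
  by_contra! h
  have : {s | 𝒮.p s < x} = ∅ :=
    eq_empty_of_forall_notMem fun s hs => (h.trans (𝒮.p_nonneg s)).not_gt hs
  simp [G0, this] at hx

theorem alphaLo_nonneg : 0 ≤ 𝒮.alphaLo :=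
  le_csInf ⟨2, by simp [𝒮.G0_eq_one_of_one_lt one_lt_two]⟩ fun _ hx => (𝒮.pos_of_G0_pos hx).le

theorem G0_eq_zero_of_lt_alphaLo {x : ℝ} (hx : x < 𝒮.alphaLo) : 𝒮.G0 x = 0 :=
  (𝒮.G0_nonneg x).eq_of_not_lt' fun h =>
    hx.not_ge (csInf_le ⟨0, fun _ hy => (𝒮.pos_of_G0_pos hy).le⟩ h)

theorem F0_setOf_p_lt_alphaLo : 𝒮.F0 {s | 𝒮.p s < 𝒮.alphaLo} = 0 := by
  have hunion : {s | 𝒮.p s < 𝒮.alphaLo} = ⋃ n : ℕ, {s | 𝒮.p s < 𝒮.alphaLo - 1 / (n + 1)} := by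
    ext s
    simp only [mem_ofPred_eq, mem_iUnion]
    refine ⟨fun hs => ?_, fun ⟨n, hn⟩ => hn.trans (sub_lt_self _ Nat.one_div_pos_of_nat)⟩
    obtain ⟨n, hn⟩ := exists_nat_one_div_lt (sub_pos.2 hs)
    exact ⟨n, by linarith⟩
  rw [hunion, measure_iUnion_null_iff]
  intro n
  have := 𝒮.G0_eq_zero_of_lt_alphaLo (sub_lt_self _ (Nat.one_div_pos_of_nat (n := n)))
  rwa [G0, ENNReal.toReal_eq_zero_iff, or_iff_left (measure_ne_top _ _)] at this

theorem alphaLo_le_alphaHi : 𝒮.alphaLo ≤ 𝒮.alphaHi := by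
  refine le_csSup ⟨1, fun x hx => not_lt.1 fun h => ?_⟩ ?_
  · exact hx.ne (𝒮.G0_eq_one_of_one_lt h)
  · simp [G0, F0_setOf_p_lt_alphaLo]

theorem G0_eq_one_of_alphaHi_lt {x : ℝ} (hx : 𝒮.alphaHi < x) : 𝒮.G0 x = 1 := by
  refine (𝒮.G0_le_one x).antisymm (not_lt.1 fun h => hx.not_ge (le_csSup ⟨1, fun y hy => ?_⟩ h))
  exact not_lt.1 fun h => hy.ne (𝒮.G0_eq_one_of_one_lt h)

instance isFiniteMeasure_ref : IsFiniteMeasure 𝒮.ref := Measure.smul_finite _ (by simp)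

theorem withDensity_f0 : 𝒮.ref.withDensity 𝒮.f0 = 𝒮.F0 :=
  Measure.withDensity_rnDeriv_eq _ _ fun s hs => by simp_all [ref]

theorem withDensity_f1 : 𝒮.ref.withDensity 𝒮.f1 = 𝒮.F1 :=
  Measure.withDensity_rnDeriv_eq _ _ fun s hs => by simp_all [ref]

theorem ofReal_mul_f1_le {x : ℝ} (hx : 0 < x) {s : S} (hs : x ≤ 𝒮.p s) (h0 : 𝒮.f0 s ≠ ⊤)
    (h1 : 𝒮.f1 s ≠ ⊤) : ENNReal.ofReal x * 𝒮.f1 s ≤ ENNReal.ofReal (1 - x) * 𝒮.f0 s := by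
  rw [← ENNReal.ofReal_toReal h0, ← ENNReal.ofReal_toReal h1, ← ENNReal.ofReal_mul hx.le,
    ← ENNReal.ofReal_mul (by linarith [𝒮.p_le_one s])]
  refine ENNReal.ofReal_le_ofReal ?_
  set u := (𝒮.f0 s).toReal
  set w := (𝒮.f1 s).toReal
  have hp : 𝒮.p s = u / (u + w) := rfl
  have hsum : 0 < u + w := by
    refine (add_nonneg ENNReal.toReal_nonneg ENNReal.toReal_nonneg).lt_of_ne' fun h => ?_
    rw [hp, h, div_zero] at hs
    linarith
  rw [hp, le_div_iff₀ hsum] at hs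
  linarith

theorem ofReal_mul_F1_le {x : ℝ} (hx : 0 < x) {A : Set S} (hA : MeasurableSet A)
    (hAx : ∀ s ∈ A, x ≤ 𝒮.p s) :
    ENNReal.ofReal x * 𝒮.F1 A ≤ ENNReal.ofReal (1 - x) * 𝒮.F0 A := by
  rw [← 𝒮.withDensity_f0, ← 𝒮.withDensity_f1, withDensity_apply _ hA, withDensity_apply _ hA,
    ← lintegral_const_mul' _ _ ENNReal.ofReal_ne_top,
    ← lintegral_const_mul' _ _ ENNReal.ofReal_ne_top]
  refine setLIntegral_mono_ae ((Measure.measurable_rnDeriv _ _).const_mul _).aemeasurable ?_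
  filter_upwards [Measure.rnDeriv_ne_top 𝒮.F0 𝒮.ref, Measure.rnDeriv_ne_top 𝒮.F1 𝒮.ref]
    with s h0 h1 hs
  exact 𝒮.ofReal_mul_f1_le hx (hAx s hs) h0 h1

theorem alphaLo_mul_G1_le (hα : 0 < 𝒮.alphaLo) (hα1 : 𝒮.alphaLo ≤ 1) (x : ℝ) :
    𝒮.alphaLo * 𝒮.G1 x ≤ (1 - 𝒮.alphaLo) * 𝒮.G0 x := by
  set α := 𝒮.alphaLo
  set A := {s | α ≤ 𝒮.p s ∧ 𝒮.p s < x}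
  have hA : MeasurableSet A :=
    (measurableSet_le measurable_const 𝒮.measurable_p).inter (𝒮.measurable_p measurableSet_Iio)
  have hF1 : 𝒮.F1 {s | 𝒮.p s < x} ≤ 𝒮.F1 A :=
    calc 𝒮.F1 {s | 𝒮.p s < x} ≤ 𝒮.F1 ({s | 𝒮.p s < α} ∪ A) :=
          measure_mono fun s hs => (lt_or_ge (𝒮.p s) α).imp id fun h => ⟨h, hs⟩
      _ ≤ 𝒮.F1 {s | 𝒮.p s < α} + 𝒮.F1 A := measure_union_le _ _
      _ = 𝒮.F1 A := by rw [𝒮.ac10 𝒮.F0_setOf_p_lt_alphaLo, zero_add]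
  have key : ENNReal.ofReal α * 𝒮.F1 {s | 𝒮.p s < x} ≤
      ENNReal.ofReal (1 - α) * 𝒮.F0 {s | 𝒮.p s < x} :=
    calc _ ≤ ENNReal.ofReal α * 𝒮.F1 A := by gcongr
      _ ≤ ENNReal.ofReal (1 - α) * 𝒮.F0 A := 𝒮.ofReal_mul_F1_le hα hA fun s hs => hs.1
      _ ≤ _ := by gcongr; exact fun s hs => hs.2
  have := ENNReal.toReal_mono (by finiteness) key
  rwa [ENNReal.toReal_mul, ENNReal.toReal_mul, ENNReal.toReal_ofReal hα.le,
    ENNReal.toReal_ofReal (sub_nonneg.2 hα1)] at this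

theorem exists_pos_mul_sub_alphaLo_le_G0 {g0 g1 : ℝ → ℝ} (hA : 𝒮.Assumption1 g0 g1)
    (h0 : 0 < g0 𝒮.alphaLo) : ∃ k > 0, ∀ w ≤ 1, k * (w - 𝒮.alphaLo) ≤ 𝒮.G0 w := by
  rcases lt_or_ge 𝒮.alphaLo 𝒮.alphaHi with hlt | hge
  · exact exists_pos_mul_sub_le_of_hasDerivAt hlt 𝒮.G0_mono 𝒮.G0_nonneg
      hA.hasDeriv0 (hA.cont0 _ ⟨le_rfl, hlt.le⟩) h0 1
  refine ⟨1, one_pos, fun w hw => ?_⟩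
  rcases le_or_gt w 𝒮.alphaLo with hwα | hαw
  · linarith [𝒮.G0_nonneg w]
  · rw [𝒮.G0_eq_one_of_alphaHi_lt (hge.trans_lt hαw)]
    linarith [𝒮.alphaLo_nonneg]

theorem exists_pos_mul_le_G0 {g0 g1 : ℝ → ℝ} (hA : 𝒮.Assumption1 g0 g1) (hb : 𝒮.Bounded)
    (h0 : 0 < g0 𝒮.alphaLo) :
    ∃ c > 0, ∀ w ∈ Icc 𝒮.alphaLo 1, c * 𝒮.G1 w ≤ 𝒮.G0 w ∧ c * (w - 𝒮.alphaLo) ≤ 𝒮.G0 w := by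
  obtain ⟨k, hk, hG0⟩ := 𝒮.exists_pos_mul_sub_alphaLo_le_G0 hA h0
  have hα1 := 𝒮.alphaLo_le_alphaHi.trans hb.2.le
  refine ⟨min 𝒮.alphaLo k, lt_min hb.1 hk, fun w hw => ⟨?_, ?_⟩⟩
  · calc min 𝒮.alphaLo k * 𝒮.G1 w ≤ 𝒮.alphaLo * 𝒮.G1 w :=
          mul_le_mul_of_nonneg_right (min_le_left _ _) (𝒮.G1_nonneg w)
      _ ≤ (1 - 𝒮.alphaLo) * 𝒮.G0 w := 𝒮.alphaLo_mul_G1_le hb.1 hα1 w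
      _ ≤ 𝒮.G0 w := mul_le_of_le_one_left (𝒮.G0_nonneg w) (by linarith [hb.1])
  · calc min 𝒮.alphaLo k * (w - 𝒮.alphaLo) ≤ k * (w - 𝒮.alphaLo) :=
          mul_le_mul_of_nonneg_right (min_le_right _ _) (sub_nonneg.2 hw.1)
      _ ≤ 𝒮.G0 w := hG0 w hw.2

end SignalStructure

theorem two_mul_posterior_sub_one_mul {μ q : ℝ} (h : μ * q + (1 - μ) * (1 - q) ≠ 0) :
    (2 * posterior μ q - 1) * (μ * q + (1 - μ) * (1 - q)) = q - (1 - μ) := by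
  unfold posterior
  field_simp
  ring

def fullMarketThreshold (μ τ : ℝ) : ℝ := (1 - μ) * (1 + τ) / (2 * μ - (2 * μ - 1) * (1 + τ))

theorem fullMarketThreshold_le_one {μ τ : ℝ} (hμ0 : 0 ≤ μ) (hμ1 : μ < 1) (hτ0 : 0 ≤ τ)
    (hτ1 : τ ≤ 1) : fullMarketThreshold μ τ ≤ 1 :=
  div_le_one_of_le₀ (by nlinarith) (by nlinarith)

theorem mul_le_sub_of_fullMarketThreshold_le {μ τ v : ℝ} (hμ0 : 0 ≤ μ) (hμ1 : μ < 1)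
    (hτ0 : 0 ≤ τ) (hτ1 : τ ≤ 1) (hv : fullMarketThreshold μ τ ≤ v) :
    τ * ((2 * μ - 1) * v + (1 - μ)) ≤ v - (1 - μ) := by
  rw [fullMarketThreshold, div_le_iff₀ (by nlinarith)] at hv
  linarith

theorem sub_le_gain_mul {μ α τ v G : ℝ} (hD : 0 < μ * α + (1 - μ) * (1 - α)) (hG : G ≤ 1)
    (hτv : τ * ((2 * μ - 1) * v + (1 - μ)) ≤ v - (1 - μ)) :
    G * (v - (1 - μ)) * (μ * α + (1 - μ) * (1 - α)) - 2 * (1 - μ) * μ * (v - α) ≤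
      ((2 * posterior μ α - 1) - (1 - G) * τ) *
        ((μ * α + (1 - μ) * (1 - α)) * ((2 * μ - 1) * v + (1 - μ))) := by
  have hpost := two_mul_posterior_sub_one_mul hD.ne'
  have := mul_le_mul_of_nonneg_left hτv (mul_nonneg (sub_nonneg.2 hG) hD.le)
  linear_combination (-((2 * μ - 1) * v + (1 - μ))) * hpost + this

theorem future_loss_le_current_gain {α δ C c μ τ v a b : ℝ}
    (hα : 0 < α) (hα1 : α ≤ 1) (hδ : δ < 1) (hδC : 0 ≤ δ * C) (hc : 0 < c)
    (hμ : 1 / 2 ≤ μ) (hμ1 : μ ≤ 1) (hε : 1 - μ ≤ α / 3)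
    (hεδ : 6 * (1 - μ) * (δ * C + 2 * (1 - δ)) ≤ (1 - δ) * c * α ^ 2)
    (hαv : α ≤ v) (hv1 : v ≤ 1) (hτv : τ * ((2 * μ - 1) * v + (1 - μ)) ≤ v - (1 - μ))
    (ha0 : 0 ≤ a) (ha1 : a ≤ 1) (hb0 : 0 ≤ b) (hb1 : b ≤ 1) (hcb : c * b ≤ a)
    (hcv : c * (v - α) ≤ a) :
    δ * C * (μ * (1 - μ)) * (b - a) ≤
      (1 - δ) * ((2 * posterior μ α - 1) - (1 - (μ * a + (1 - μ) * b)) * τ) := by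
  set D := μ * α + (1 - μ) * (1 - α)
  set Dv := (2 * μ - 1) * v + (1 - μ)
  set G := μ * a + (1 - μ) * b
  have hD : α / 2 ≤ D := by nlinarith
  have hD1 : D ≤ 1 := by nlinarith
  have hDv : 0 < Dv := by nlinarith
  have hDv1 : Dv ≤ 1 := by nlinarith
  have hK : 0 < D * Dv := by positivity
  have hK1 : D * Dv ≤ 1 := by nlinarith
  have hR := sub_le_gain_mul (α := α) (G := G) (by linarith) (by nlinarith) hτv
  have hGv : a * α ^ 2 / 6 ≤ G * (v - (1 - μ)) * D := by
    have hG : a / 2 ≤ G := by nlinarith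
    calc a * α ^ 2 / 6 = a / 2 * (2 * α / 3) * (α / 2) := by ring
      _ ≤ G * (v - (1 - μ)) * D := by
        gcongr
        · exact mul_nonneg (by linarith) (by linarith)
        · linarith
  have hbK : μ * c * ((b - a) * (D * Dv)) ≤ a := by
    have hbK' : (b - a) * (D * Dv) ≤ b := by
      nlinarith [mul_nonneg hb0 (sub_nonneg.2 hK1), mul_nonneg ha0 hK.le]
    calc μ * c * ((b - a) * (D * Dv)) ≤ μ * (c * b) := by
          rw [mul_assoc]; gcongr
      _ ≤ c * b := mul_le_of_le_one_left (by positivity) hμ1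
      _ ≤ a := hcb
  rw [← mul_le_mul_iff_of_pos_right (mul_pos hK hc)]
  calc δ * C * (μ * (1 - μ)) * (b - a) * (D * Dv * c)
      = δ * C * (1 - μ) * (μ * c * ((b - a) * (D * Dv))) := by ring
    _ ≤ δ * C * (1 - μ) * a := by gcongr
    _ ≤ (1 - δ) * (c * (a * α ^ 2 / 6) - 2 * (1 - μ) * a) := by
      linear_combination mul_le_mul_of_nonneg_right hεδ ha0 / 6
    _ ≤ (1 - δ) * (c * (G * (v - (1 - μ)) * D) - 2 * (1 - μ) * (μ * (c * (v - α)))) := by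
      gcongr
      exact (mul_le_of_le_one_left (mul_nonneg hc.le (sub_nonneg.2 hαv)) hμ1).trans hcv
    _ = (1 - δ) * (c * (G * (v - (1 - μ)) * D - 2 * (1 - μ) * μ * (v - α))) := by ring
    _ ≤ (1 - δ) * (c * (((2 * posterior μ α - 1) - (1 - G) * τ) * (D * Dv))) := by
      gcongr
    _ = _ := by ring

theorem stmt19_general {S : Type} [MeasurableSpace S] (𝒮 : SignalStructure S)
    (g0 g1 : ℝ → ℝ) (hA : 𝒮.Assumption1 g0 g1)
    (hb : 𝒮.Bounded)
    (h0 : 0 < g0 𝒮.alphaLo) :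
    ∀ δ ∈ Ioo (0:ℝ) 1, ∀ C > (0:ℝ), ∃ μ' ∈ Ioo (0:ℝ) 1, ∀ μ ∈ Ico μ' 1,
      ∀ τ ∈ Icc (0:ℝ) 1, ∀ vτ : ℝ,
        vτ = max 𝒮.alphaLo ((1 - μ) * (1 + τ) / (2 * μ - (2 * μ - 1) * (1 + τ))) →
          δ * C * (μ * (1 - μ)) * (𝒮.G1 vτ - 𝒮.G0 vτ) ≤
            (1 - δ) *
              ((2 * posterior μ 𝒮.alphaLo - 1) -
                (1 - (μ * 𝒮.G0 vτ + (1 - μ) * 𝒮.G1 vτ)) * τ) := by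
  intro δ ⟨hδ0, hδ1⟩ C hC
  obtain ⟨c, hc, hcG⟩ := 𝒮.exists_pos_mul_le_G0 hA hb h0
  have hα1 := 𝒮.alphaLo_le_alphaHi.trans hb.2.le
  set α := 𝒮.alphaLo
  have hK : 0 < 6 * (δ * C + 2 * (1 - δ)) := by nlinarith
  set ε := min (α / 3) ((1 - δ) * c * α ^ 2 / (6 * (δ * C + 2 * (1 - δ))))
  have hε : 0 < ε := lt_min (by linarith [hb.1])
    (div_pos (mul_pos (mul_pos (sub_pos.2 hδ1) hc) (pow_pos hb.1 2)) hK)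
  have hεα : ε ≤ α / 3 := min_le_left _ _
  have hεδ : ε * (6 * (δ * C + 2 * (1 - δ))) ≤ (1 - δ) * c * α ^ 2 :=
    (le_div_iff₀ hK).1 (min_le_right _ _)
  refine ⟨1 - ε, ⟨by linarith, by linarith⟩, fun μ ⟨hμ, hμ1⟩ τ ⟨hτ0, hτ1⟩ v hv => ?_⟩
  have hμ0 : 0 ≤ μ := by linarith
  have hv1 : v ≤ 1 := hv ▸ max_le hα1 (fullMarketThreshold_le_one hμ0 hμ1 hτ0 hτ1)
  have hαv : α ≤ v := hv ▸ le_max_left _ _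
  have hτv := mul_le_sub_of_fullMarketThreshold_le hμ0 hμ1 hτ0 hτ1 (hv ▸ le_max_right _ _)
  obtain ⟨hcb, hcv⟩ := hcG v ⟨hαv, hv1⟩
  exact future_loss_le_current_gain hb.1 hα1 hδ1 (by positivity) hc (by linarith) hμ1.le
    (by linarith) (by nlinarith) hαv hv1 hτv (𝒮.G0_nonneg v) (𝒮.G0_le_one v)
    (𝒮.G1_nonneg v) (𝒮.G1_le_one v) hcb hcv

/-- With bounded signals and g₀(α⁻) > 0, g₁(α⁻) > 0: for every
δ ∈ (0,1) and C > 0 there is μ' ∈ (0,1) such that for all μ ∈ [μ',1) and τ ∈ [0,1],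
(1−δ)[(2α⁻_μ−1) − (1−G_μ(v_μ(τ,0)))τ] ≥ δCμ(1−μ)[G₁(v_μ(τ,0)) − G₀(v_μ(τ,0))],
where v_μ(τ,0) = max{α⁻, (1−μ)(1+τ)/(2μ−(2μ−1)(1+τ))}. -/
theorem stmt19 {S : Type} [MeasurableSpace S] (𝒮 : SignalStructure S)
    (g0 g1 : ℝ → ℝ) (hA : 𝒮.Assumption1 g0 g1)
    (hb : 𝒮.Bounded)
    (h0 : 0 < g0 𝒮.alphaLo) (h1 : 0 < g1 𝒮.alphaLo) :
    ∀ δ ∈ Ioo (0:ℝ) 1, ∀ C > (0:ℝ), ∃ μ' ∈ Ioo (0:ℝ) 1, ∀ μ ∈ Ico μ' 1,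
      ∀ τ ∈ Icc (0:ℝ) 1, ∀ vτ : ℝ,
        vτ = max 𝒮.alphaLo ((1 - μ) * (1 + τ) / (2 * μ - (2 * μ - 1) * (1 + τ))) →
          δ * C * (μ * (1 - μ)) * (𝒮.G1 vτ - 𝒮.G0 vτ) ≤
            (1 - δ) *
              ((2 * posterior μ 𝒮.alphaLo - 1) -
                (1 - (μ * 𝒮.G0 vτ + (1 - μ) * 𝒮.G1 vτ)) * τ) :=
  stmt19_general 𝒮 g0 g1 hA hb h0
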